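/- The infimum of f over all feasible permutation schedules for the full PFB instance that are ordered by the identity permutation (i.e., c_{i,1} ≤ c_{i,2} ≤ … ≤ c_{i,n} for all machines i) is attained, and it equals min_{t ∈ Γ, k ∈ B} g(n,t,k). -/

import Mathlib

/-!
Among the feasible ordered schedules below a given one, a minimal one is semi-active: each
batch on machine `i` completes exactly `p i` after one of its jobs becomes ready, or exactly
`p i` after an earlier batch, since otherwise the whole batch could be moved one time unit
earlier. Following these chains back, a completion time on machine `i` is a ready time plus
at most `n + 1` multiples of `p i`, so by induction over the machines it lies in `Γ_i`. As the
objective is nondecreasing, the optimum over ordered schedules is therefore attained on the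
finite set of Γ-active ones; the sets `𝒮(n,t,k)` partition that set, whence the formula.
-/

/-- A PFB instance has `m+1` machines and `n+1` jobs. `FeasibleUpTo p b r J c` is
feasibility of the schedule `c` for the sub-instance `I_J` containing only the jobs
`0,…,J`: release dates are respected on the first machine, consecutive machines leave
enough processing time, two jobs of `I_J` with different completion times on a machine
differ by at least its processing time, and at most `b i` jobs of `I_J` complete at
any given time on machine `i`. -/
def FeasibleUpTo {m n : ℕ} (p b : Fin (m + 1) → ℕ) (r : Fin (n + 1) → ℕ)
    (J : Fin (n + 1)) (c : Fin (m + 1) → Fin (n + 1) → ℕ) : Prop :=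
  (∀ j ≤ J, r j + p 0 ≤ c 0 j) ∧
  (∀ (i : Fin m), ∀ j ≤ J, c i.castSucc j + p i.succ ≤ c i.succ j) ∧
  (∀ (i : Fin (m + 1)), ∀ j ≤ J, ∀ j' ≤ J,
      c i j ≠ c i j' → c i j + p i ≤ c i j' ∨ c i j' + p i ≤ c i j) ∧
  (∀ (i : Fin (m + 1)) (t : ℕ),
      (Finset.univ.filter (fun j => j ≤ J ∧ c i j = t)).card ≤ b i)

/-- `Gamma p r i = { r j' + ∑_{i' ≤ i} λ_{i'}·p_{i'} | j' a job, λ_{i'} ∈ {1,…,n+1} }`. -/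
def Gamma {m n : ℕ} (p : Fin (m + 1) → ℕ) (r : Fin (n + 1) → ℕ)
    (i : Fin (m + 1)) : Set ℕ :=
  { x | ∃ (j' : Fin (n + 1)) (lam : Fin (m + 1) → ℕ),
      (∀ i' ≤ i, 1 ≤ lam i' ∧ lam i' ≤ n + 1) ∧
      x = r j' + ∑ i' ∈ Finset.Iic i, lam i' * p i' }

/-- `𝒮(J,t,k)`: feasible schedules for `I_J` that are ordered by the job indices,
correspond to the completion-time vector `t` and batch-size vector `k` (job `J`
completes machine `i` at time `t i` in a batch of exactly `k i` jobs of `I_J`),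
and are Γ-active. -/
def SchedSet {m n : ℕ} (p b : Fin (m + 1) → ℕ) (r : Fin (n + 1) → ℕ)
    (J : Fin (n + 1)) (t k : Fin (m + 1) → ℕ) :
    Set (Fin (m + 1) → Fin (n + 1) → ℕ) :=
  { c | FeasibleUpTo p b r J c ∧
      (∀ i : Fin (m + 1), ∀ j ≤ J, ∀ j' ≤ J, j ≤ j' → c i j ≤ c i j') ∧
      (∀ i : Fin (m + 1), c i J = t i ∧
        (Finset.univ.filter (fun j' => j' ≤ J ∧ c i j' = t i)).card = k i) ∧
      (∀ i : Fin (m + 1), ∀ j ≤ J, c i j ∈ Gamma p r i) }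

/-- The objective value `⊕_{j' ≤ J} f_{j'}(C_{j'})` of a schedule for `I_J`, where
`⊕` is the sum if `useSum = true` and the maximum otherwise. -/
noncomputable def obj {m n : ℕ} (useSum : Bool) (f : Fin (n + 1) → ℕ → ℝ)
    (J : Fin (n + 1)) (c : Fin (m + 1) → Fin (n + 1) → ℕ) : ℝ :=
  if useSum then ∑ j ∈ Finset.Iic J, f j (c (Fin.last m) j)
  else (Finset.Iic J).sup' ⟨J, Finset.mem_Iic.mpr le_rfl⟩
    fun j => f j (c (Fin.last m) j)

/-- The dynamic-programming value `g(J,t,k)`: the minimum (in `ℝ ∪ {+∞} = EReal`,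
with `+∞` for an empty set) of the objective over all schedules in `𝒮(J,t,k)`. -/
noncomputable def g {m n : ℕ} (useSum : Bool) (p b : Fin (m + 1) → ℕ)
    (r : Fin (n + 1) → ℕ) (f : Fin (n + 1) → ℕ → ℝ) (J : Fin (n + 1))
    (t k : Fin (m + 1) → ℕ) : EReal :=
  sInf { x : EReal | ∃ c ∈ SchedSet p b r J t k, x = ((obj useSum f J c : ℝ) : EReal) }

open Finset

section Row

variable {ι : Type*} {w : ι → ℕ} {q v : ℕ}

def lowerAt (v x : ℕ) : ℕ := if x = v then v - 1 else x

lemma lowerAt_le (v x : ℕ) : lowerAt v x ≤ x := by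
  unfold lowerAt; split_ifs <;> omega

lemma monotone_lowerAt (v : ℕ) : Monotone (lowerAt v) := by
  intro x y hxy; unfold lowerAt; split_ifs <;> omega

lemma lowerAt_comp_sep (hgap : ∀ j, w j < v → w j + q < v)
    (hsep : ∀ j j', w j ≠ w j' → w j + q ≤ w j' ∨ w j' + q ≤ w j) (j j' : ι) :
    lowerAt v (w j) ≠ lowerAt v (w j') →
      lowerAt v (w j) + q ≤ lowerAt v (w j') ∨ lowerAt v (w j') + q ≤ lowerAt v (w j) := by
  have := hsep j j'; have := hgap j; have := hgap j'
  unfold lowerAt; split_ifs <;> omega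

lemma eq_of_lowerAt_comp_eq (hq : 1 ≤ q) (hgap : ∀ j, w j < v → w j + q < v) {j j' : ι}
    (h : lowerAt v (w j) = lowerAt v (w j')) : w j = w j' := by
  have := hgap j; have := hgap j'
  unfold lowerAt at h; split_ifs at h <;> omega

lemma card_fiber_le_of_eq_imp_eq {w' : ι → ℕ} [Fintype ι] {b : ℕ}
    (hinj : ∀ j j', w' j = w' j' → w j = w j') (hb : ∀ s, #{j | w j = s} ≤ b) (t : ℕ) :
    #{j | w' j = t} ≤ b := by
  obtain ⟨j₀, hj₀⟩ | hempty := (univ.filter (fun j => w' j = t)).eq_empty_or_nonempty.symm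
  · refine (card_le_card fun j hj => ?_).trans (hb (w j₀))
    simp only [mem_filter, mem_univ, true_and] at hj hj₀ ⊢
    exact hinj j j₀ (hj.trans hj₀.symm)
  · simp [hempty]

end Row

section Schedule

variable {m n : ℕ} {p b : Fin (m + 1) → ℕ} {r : Fin (n + 1) → ℕ}
  {c d : Fin (m + 1) → Fin (n + 1) → ℕ}

def readyTime (r : Fin (n + 1) → ℕ) (c : Fin (m + 1) → Fin (n + 1) → ℕ) :
    Fin (m + 1) → Fin (n + 1) → ℕ :=
  Fin.cases r fun i => c i.castSucc

lemma readyTime_mono (r : Fin (n + 1) → ℕ) (h : d ≤ c) : readyTime r d ≤ readyTime r c := by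
  intro i j
  cases i using Fin.cases with
  | zero => exact le_rfl
  | succ i => exact h i.castSucc j

lemma feasibleUpTo_last_iff :
    FeasibleUpTo p b r (Fin.last n) c ↔
      (∀ i j, readyTime r c i j + p i ≤ c i j) ∧
      (∀ i j j', c i j ≠ c i j' → c i j + p i ≤ c i j' ∨ c i j' + p i ≤ c i j) ∧
      (∀ i t, #{j | c i j = t} ≤ b i) := by
  simp [FeasibleUpTo, readyTime, Fin.forall_fin_succ (P := fun i => ∀ j, _ ≤ c i j),
    Fin.le_last, and_assoc]

end Schedule

section Lowering

variable {m n : ℕ} {p b : Fin (m + 1) → ℕ} {r : Fin (n + 1) → ℕ}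
  {c : Fin (m + 1) → Fin (n + 1) → ℕ} {i : Fin (m + 1)} {v : ℕ}

def lowerBatch (c : Fin (m + 1) → Fin (n + 1) → ℕ) (i : Fin (m + 1)) (v : ℕ) :
    Fin (m + 1) → Fin (n + 1) → ℕ :=
  Function.update c i (lowerAt v ∘ c i)

lemma lowerBatch_le : lowerBatch c i v ≤ c := by
  intro i' j
  by_cases h : i' = i
  · subst h; simp [lowerBatch, lowerAt_le]
  · simp [lowerBatch, h]

lemma monotone_lowerBatch (hc : ∀ i, Monotone (c i)) (i' : Fin (m + 1)) :
    Monotone (lowerBatch c i v i') := by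
  by_cases h : i' = i
  · subst h; simpa [lowerBatch] using (monotone_lowerAt v).comp (hc i')
  · simpa [lowerBatch, h] using hc i'

lemma feasibleUpTo_lowerBatch (hp : 1 ≤ p i) (hc : FeasibleUpTo p b r (Fin.last n) c)
    (hready : ∀ j, c i j = v → readyTime r c i j + p i < v)
    (hgap : ∀ j, c i j < v → c i j + p i < v) :
    FeasibleUpTo p b r (Fin.last n) (lowerBatch c i v) := by
  obtain ⟨hrel, hsep, hcap⟩ := feasibleUpTo_last_iff.mp hc
  have hready' := readyTime_mono r (lowerBatch_le (c := c) (i := i) (v := v))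
  refine feasibleUpTo_last_iff.mpr ⟨fun i' j => ?_, fun i' => ?_, fun i' => ?_⟩
  · refine (Nat.add_le_add_right (hready' i' j) _).trans ?_
    by_cases h : i' = i
    · subst h
      have := hrel i' j; have := hready j
      simp only [lowerBatch, Function.update_self, Function.comp_apply, lowerAt]
      split_ifs <;> omega
    · simpa [lowerBatch, h] using hrel i' j
  · by_cases h : i' = i
    · subst h; simpa [lowerBatch] using lowerAt_comp_sep hgap (hsep i')
    · simpa [lowerBatch, h] using hsep i'
  · by_cases h : i' = i
    · subst h
      simpa [lowerBatch] using
        card_fiber_le_of_eq_imp_eq (fun j j' => eq_of_lowerAt_comp_eq hp hgap) (hcap i')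
    · simpa [lowerBatch, h] using hcap i'

end Lowering

section SemiActive

variable {m n : ℕ} {p b : Fin (m + 1) → ℕ} {r : Fin (n + 1) → ℕ}
  {c : Fin (m + 1) → Fin (n + 1) → ℕ}

def IsSemiActive (p : Fin (m + 1) → ℕ) (r : Fin (n + 1) → ℕ)
    (c : Fin (m + 1) → Fin (n + 1) → ℕ) : Prop :=
  ∀ i j, (∃ j', c i j' = c i j ∧ readyTime r c i j' + p i = c i j) ∨ ∃ j', c i j' + p i = c i j

lemma isSemiActive_of_minimal (hp : ∀ i, 1 ≤ p i)
    (hmin : Minimal (fun d => FeasibleUpTo p b r (Fin.last n) d ∧ ∀ i, Monotone (d i)) c) :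
    IsSemiActive p r c := by
  intro i j
  by_contra! ⟨hnotReady, hnotGap⟩
  obtain ⟨⟨hc, hmono⟩, hle⟩ := hmin
  obtain ⟨hrel, hsep, -⟩ := feasibleUpTo_last_iff.mp hc
  have hready : ∀ j', c i j' = c i j → readyTime r c i j' + p i < c i j := fun j' h =>
    lt_of_le_of_ne (h ▸ hrel i j') (hnotReady j' h)
  have hgap : ∀ j', c i j' < c i j → c i j' + p i < c i j := fun j' h => by
    have := hsep i j' j h.ne; have := hnotGap j'; omega
  have hlower := hle ⟨feasibleUpTo_lowerBatch (hp i) hc hready hgap, monotone_lowerBatch hmono⟩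
    lowerBatch_le i j
  have := hready j rfl
  simp only [lowerBatch, Function.update_self, Function.comp_apply, lowerAt, if_true] at hlower
  omega

lemma exists_isSemiActive_le (hp : ∀ i, 1 ≤ p i) (hc : FeasibleUpTo p b r (Fin.last n) c)
    (hmono : ∀ i, Monotone (c i)) :
    ∃ d ≤ c, FeasibleUpTo p b r (Fin.last n) d ∧ (∀ i, Monotone (d i)) ∧ IsSemiActive p r d := by
  obtain ⟨d, hdc, hmin⟩ := exists_minimal_le_of_wellFoundedLT
    (fun d => FeasibleUpTo p b r (Fin.last n) d ∧ ∀ i, Monotone (d i)) c ⟨hc, hmono⟩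
  exact ⟨d, hdc, hmin.prop.1, hmin.prop.2, isSemiActive_of_minimal hp hmin⟩

end SemiActive

section Gamma

variable {m n : ℕ} {p : Fin (m + 1) → ℕ} {r : Fin (n + 1) → ℕ}

lemma exists_eq_add_mul_of_tight {w lb : Fin (n + 1) → ℕ} {q : ℕ} (hq : 1 ≤ q) (hw : Monotone w)
    (htight : ∀ j, (∃ j', w j' = w j ∧ lb j' + q = w j) ∨ ∃ j', w j' + q = w j)
    (j : Fin (n + 1)) : ∃ j₀, ∃ μ ≤ (j : ℕ), w j = lb j₀ + (μ + 1) * q := by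
  induction j using WellFoundedLT.induction with
  | _ j ih =>
    rcases htight j with ⟨j₀, hj₀, hready⟩ | ⟨j', hj'⟩
    · exact ⟨j₀, 0, Nat.zero_le _, by omega⟩
    · have hlt : j' < j := lt_of_not_ge fun hle => by have := hw hle; omega
      obtain ⟨j₀, μ, hμ, heq⟩ := ih j' hlt
      refine ⟨j₀, μ + 1, by have := Fin.lt_def.mp hlt; omega, ?_⟩
      rw [← hj', heq]; ring

lemma Iic_succ_eq_insert (i : Fin m) :
    Finset.Iic i.succ = insert i.succ (Finset.Iic i.castSucc) := by
  ext y
  simp only [Finset.mem_Iic, Finset.mem_insert, Fin.le_def, Fin.ext_iff, Fin.val_succ,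
    Fin.val_castSucc]
  omega

lemma add_mul_mem_Gamma_zero (j : Fin (n + 1)) {μ : ℕ} (hμ : 1 ≤ μ) (hμn : μ ≤ n + 1) :
    r j + μ * p 0 ∈ Gamma p r 0 :=
  ⟨j, fun _ => μ, fun _ _ => ⟨hμ, hμn⟩, by rw [← bot_eq_zero, Finset.Iic_bot, Finset.sum_singleton]⟩

lemma add_mul_mem_Gamma_succ {i : Fin m} {x μ : ℕ} (hx : x ∈ Gamma p r i.castSucc)
    (hμ : 1 ≤ μ) (hμn : μ ≤ n + 1) : x + μ * p i.succ ∈ Gamma p r i.succ := by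
  obtain ⟨j, lam, hlam, rfl⟩ := hx
  have hnotMem : i.succ ∉ Finset.Iic i.castSucc := by simp [Fin.le_def]
  refine ⟨j, Function.update lam i.succ μ, fun i' hi' => ?_, ?_⟩
  · by_cases h : i' = i.succ
    · subst h; simp [hμ, hμn]
    · rw [Function.update_of_ne h]
      exact hlam i' (by simp [Fin.le_def, Fin.ext_iff] at hi' h ⊢; omega)
  · have hsum : ∑ i' ∈ Finset.Iic i.castSucc, Function.update lam i.succ μ i' * p i' =
        ∑ i' ∈ Finset.Iic i.castSucc, lam i' * p i' :=
      Finset.sum_congr rfl fun i' hi' => by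
        rw [Function.update_of_ne (ne_of_mem_of_not_mem hi' hnotMem)]
    rw [Iic_succ_eq_insert, Finset.sum_insert hnotMem, Function.update_self, hsum]
    ring

lemma mem_Gamma_of_isSemiActive {c : Fin (m + 1) → Fin (n + 1) → ℕ} (hp : ∀ i, 1 ≤ p i)
    (hmono : ∀ i, Monotone (c i)) (hc : IsSemiActive p r c) (i : Fin (m + 1)) :
    ∀ j, c i j ∈ Gamma p r i := by
  have hrow : ∀ i j, ∃ j₀, ∃ μ ≤ n, c i j = readyTime r c i j₀ + (μ + 1) * p i := fun i j => by
    obtain ⟨j₀, μ, hμ, heq⟩ := exists_eq_add_mul_of_tight (hp i) (hmono i) (hc i) j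
    exact ⟨j₀, μ, hμ.trans j.is_le, heq⟩
  induction i using Fin.induction with
  | zero =>
    intro j
    obtain ⟨j₀, μ, hμ, heq⟩ := hrow 0 j
    exact heq ▸ add_mul_mem_Gamma_zero j₀ (Nat.le_add_left _ _) (by omega)
  | succ i ih =>
    intro j
    obtain ⟨j₀, μ, hμ, heq⟩ := hrow i.succ j
    exact heq ▸ add_mul_mem_Gamma_succ (ih j₀) (Nat.le_add_left _ _) (by omega)

end Gamma

section Optimum

variable {m n : ℕ} {p b : Fin (m + 1) → ℕ} {r : Fin (n + 1) → ℕ}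

lemma exists_feasibleUpTo_monotone (hp : ∀ i, 1 ≤ p i) (hb : ∀ i, 1 ≤ b i) :
    ∃ c, FeasibleUpTo p b r (Fin.last n) c ∧ ∀ i, Monotone (c i) := by
  set R := univ.sup r
  set P := ∑ i, p i
  have hpP : ∀ i, p i ≤ P := fun i => single_le_sum (fun _ _ => Nat.zero_le _) (mem_univ i)
  have hP : 1 ≤ P := (hp 0).trans (hpP 0)
  refine ⟨fun i j => R + ((i : ℕ) + j + 1) * P, feasibleUpTo_last_iff.mpr ⟨?_, ?_, ?_⟩, ?_⟩
  · intro i j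
    cases i using Fin.cases with
    | zero =>
      have := le_sup (f := r) (mem_univ j)
      have := hpP 0
      simp only [readyTime, Fin.cases_zero, Fin.val_zero]
      nlinarith
    | succ i =>
      have := hpP i.succ
      simp only [readyTime, Fin.cases_succ, Fin.val_succ, Fin.val_castSucc]
      nlinarith
  · intro i j j' hne
    have := hpP i
    rcases lt_or_gt_of_ne (fun h : (j : ℕ) = j' => hne (by rw [Fin.ext h])) with h | h
    · left; nlinarith
    · right; nlinarith
  · intro i t
    refine (card_le_one.mpr fun j hj j' hj' => ?_).trans (hb i)
    simp only [mem_filter, mem_univ, true_and] at hj hj'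
    have := Nat.eq_of_mul_eq_mul_right hP (by omega : ((i : ℕ) + j + 1) * P = (i + j' + 1) * P)
    exact Fin.ext (by omega)
  · intro i j j' h
    have : (j : ℕ) ≤ j' := h
    dsimp only
    gcongr


lemma Gamma_subset_Iic (i : Fin (m + 1)) :
    Gamma p r i ⊆ Set.Iic (univ.sup r + (n + 1) * ∑ i', p i') := by
  rintro x ⟨j, lam, hlam, rfl⟩
  have hr : r j ≤ univ.sup r := le_sup (mem_univ j)
  have hsum : ∑ i' ∈ Iic i, lam i' * p i' ≤ (n + 1) * ∑ i', p i' :=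
    calc ∑ i' ∈ Iic i, lam i' * p i'
        ≤ ∑ i' ∈ Iic i, (n + 1) * p i' :=
          sum_le_sum fun i' hi' => Nat.mul_le_mul_right _ (hlam i' (mem_Iic.mp hi')).2
      _ ≤ ∑ i', (n + 1) * p i' := sum_le_sum_of_subset (subset_univ _)
      _ = (n + 1) * ∑ i', p i' := (mul_sum ..).symm
  exact Nat.add_le_add hr hsum

def activeOrderedSchedules (p b : Fin (m + 1) → ℕ) (r : Fin (n + 1) → ℕ) :
    Set (Fin (m + 1) → Fin (n + 1) → ℕ) :=
  { c | FeasibleUpTo p b r (Fin.last n) c ∧ (∀ i, Monotone (c i)) ∧ ∀ i j, c i j ∈ Gamma p r i }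

lemma activeOrderedSchedules_finite : (activeOrderedSchedules p b r).Finite :=
  (Set.Finite.pi fun i => Set.Finite.pi fun _ =>
    (Set.finite_Iic _).subset (Gamma_subset_Iic i)).subset fun c hc => by
      simpa [Set.mem_pi] using hc.2.2

lemma exists_mem_activeOrderedSchedules_le (hp : ∀ i, 1 ≤ p i)
    {c : Fin (m + 1) → Fin (n + 1) → ℕ} (hc : FeasibleUpTo p b r (Fin.last n) c)
    (hmono : ∀ i, Monotone (c i)) : ∃ d ∈ activeOrderedSchedules p b r, d ≤ c := by
  obtain ⟨d, hdc, hd, hdmono, hdActive⟩ := exists_isSemiActive_le hp hc hmono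
  exact ⟨d, ⟨hd, hdmono, mem_Gamma_of_isSemiActive hp hdmono hdActive⟩, hdc⟩

lemma activeOrderedSchedules_nonempty (hp : ∀ i, 1 ≤ p i) (hb : ∀ i, 1 ≤ b i) :
    (activeOrderedSchedules p b r).Nonempty := by
  obtain ⟨c, hc, hmono⟩ := exists_feasibleUpTo_monotone hp hb
  obtain ⟨d, hd, -⟩ := exists_mem_activeOrderedSchedules_le hp hc hmono
  exact ⟨d, hd⟩

lemma obj_mono (useSum : Bool) {f : Fin (n + 1) → ℕ → ℝ} (hf : ∀ j, Monotone (f j))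
    {c d : Fin (m + 1) → Fin (n + 1) → ℕ} (h : d ≤ c) :
    obj useSum f (Fin.last n) d ≤ obj useSum f (Fin.last n) c := by
  cases useSum
  · simp only [obj, Bool.false_eq_true, if_false]
    exact sup'_mono_fun fun j _ => hf j (h _ j)
  · simp only [obj, if_true]
    exact sum_le_sum fun j _ => hf j (h _ j)

lemma sInf_g_eq_obj (useSum : Bool) (f : Fin (n + 1) → ℕ → ℝ)
    {c₀ : Fin (m + 1) → Fin (n + 1) → ℕ} (hc₀ : c₀ ∈ activeOrderedSchedules p b r)
    (hmin : ∀ c ∈ activeOrderedSchedules p b r,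
      obj useSum f (Fin.last n) c₀ ≤ obj useSum f (Fin.last n) c) :
    sInf { x : EReal | ∃ t k : Fin (m + 1) → ℕ,
        (∀ i, t i ∈ Gamma p r i) ∧ (∀ i, 1 ≤ k i ∧ k i ≤ b i) ∧
        x = g useSum p b r f (Fin.last n) t k } =
      ((obj useSum f (Fin.last n) c₀ : ℝ) : EReal) := by
  obtain ⟨hfeas, hmono, hGamma⟩ := hc₀
  refine le_antisymm ?_ (le_sInf ?_)
  · set t₀ := fun i => c₀ i (Fin.last n)
    set k₀ := fun i => #{j | j ≤ Fin.last n ∧ c₀ i j = t₀ i}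
    have hk₀ : ∀ i, 1 ≤ k₀ i ∧ k₀ i ≤ b i := fun i =>
      ⟨card_pos.mpr ⟨Fin.last n, by simp [t₀]⟩, hfeas.2.2.2 i _⟩
    have hmem : c₀ ∈ SchedSet p b r (Fin.last n) t₀ k₀ :=
      ⟨hfeas, fun i j _ j' _ h => hmono i h, fun i => ⟨rfl, rfl⟩, fun i j _ => hGamma i j⟩
    exact sInf_le_of_le ⟨t₀, k₀, fun i => hGamma i _, hk₀, rfl⟩ (sInf_le ⟨c₀, hmem, rfl⟩)
  · rintro _ ⟨t, k, -, -, rfl⟩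
    refine le_sInf ?_
    rintro _ ⟨c, ⟨hc, hcmono, -, hcGamma⟩, rfl⟩
    exact EReal.coe_le_coe_iff.mpr <| hmin c
      ⟨hc, fun i j j' h => hcmono i j (Fin.le_last _) j' (Fin.le_last _) h,
        fun i j => hcGamma i j (Fin.le_last _)⟩

end Optimum

/-- the infimum of the objective over all feasible schedules for the full
instance (`J = Fin.last n`) that are permutation schedules ordered by the identity
permutation is attained by some schedule `c₀`, and its value equals
`min_{t ∈ Γ, k ∈ B} g(n,t,k)`. -/
theorem stmt8 {m n : ℕ} (useSum : Bool) (p b : Fin (m + 1) → ℕ)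
    (r : Fin (n + 1) → ℕ) (hp : ∀ i, 1 ≤ p i) (hb : ∀ i, 1 ≤ b i ∧ b i ≤ n + 1)
    (f : Fin (n + 1) → ℕ → ℝ) (hf : ∀ j, Monotone (f j)) :
    ∃ c₀ : Fin (m + 1) → Fin (n + 1) → ℕ,
      FeasibleUpTo p b r (Fin.last n) c₀ ∧ (∀ i : Fin (m + 1), Monotone (c₀ i)) ∧
      (∀ c : Fin (m + 1) → Fin (n + 1) → ℕ,
        FeasibleUpTo p b r (Fin.last n) c → (∀ i : Fin (m + 1), Monotone (c i)) →
        obj useSum f (Fin.last n) c₀ ≤ obj useSum f (Fin.last n) c) ∧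
      ((obj useSum f (Fin.last n) c₀ : ℝ) : EReal) =
        sInf { x : EReal | ∃ t k : Fin (m + 1) → ℕ,
          (∀ i, t i ∈ Gamma p r i) ∧ (∀ i, 1 ≤ k i ∧ k i ≤ b i) ∧
          x = g useSum p b r f (Fin.last n) t k } := by
  obtain ⟨c₀, hc₀, hmin⟩ := Set.exists_min_image _ (obj useSum f (Fin.last n))
    activeOrderedSchedules_finite (activeOrderedSchedules_nonempty hp fun i => (hb i).1)
  refine ⟨c₀, hc₀.1, hc₀.2.1, fun c hc hmono => ?_, (sInf_g_eq_obj useSum f hc₀ hmin).symm⟩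
  obtain ⟨d, hd, hdc⟩ := exists_mem_activeOrderedSchedules_le hp hc hmono
  exact (hmin d hd).trans (obj_mono useSum hf hdc)
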